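/- arXiv:1410.0288 — 2 statements merged into one kernel-verified Lean document; each statement's English description precedes it below -/
import Mathlib

section
/- Let Ω ⊆ ℂ be open and let τ, ρ : Ω → ℝ be smooth with ρ > 0, satisfying on Ω the Liouville equation Δ₀τ + e^{2τ} = 0 and the Ribaucour equation ρ² + e^{−2τ} ρ Δ₀ρ = 1 + e^{−2τ}(ρ_x² + ρ_y²). Define the dual data ρ* := 1/ρ and τ* := τ − log ρ. Then ρ* satisfies the Ribaucour equation relative to τ* on Ω: (ρ*)² + e^{−2τ*} ρ* Δ₀ρ* = 1 + e^{−2τ*}((ρ*)_x² + (ρ*)_y²). (This is the statement that the dual of a Ribaucour surface is again a Ribaucour surface.) -/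
/-- Partial derivative in the `x`-direction of a function on `ℂ ≅ ℝ²`. -/
noncomputable def pdx (u : ℂ → ℝ) (z : ℂ) : ℝ := fderiv ℝ u z 1

/-- Partial derivative in the `y`-direction of a function on `ℂ ≅ ℝ²`. -/
noncomputable def pdy (u : ℂ → ℝ) (z : ℂ) : ℝ := fderiv ℝ u z Complex.I

/-- Flat Laplacian `Δ₀u = u_xx + u_yy`. -/
noncomputable def lap (u : ℂ → ℝ) (z : ℂ) : ℝ := pdx (pdx u) z + pdy (pdy u) z

/-!
Since `Δ₀` and the gradient transform under `ρ ↦ 1/ρ` by the quotient rule, and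
`e^{-2τ*} = ρ² e^{-2τ}`, multiplying the dual equation by `ρ²` turns it into the Ribaucour
equation for `ρ` again.
-/

open Filter Topology

section InverseDerivatives

variable {E : Type*} [NormedAddCommGroup E] [NormedSpace ℝ E] {u : E → ℝ} {z : E}

theorem fderiv_inv_apply (hu : DifferentiableAt ℝ u z) (hz : u z ≠ 0) (d : E) :
    fderiv ℝ (fun w => (u w)⁻¹) z d = -fderiv ℝ u z d / u z ^ 2 := by
  rw [fderiv_fun_comp z (differentiableAt_inv hz) hu, fderiv_inv]
  simp [div_eq_mul_inv, mul_comm]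

theorem fderiv_fderiv_inv_apply (hu : ContDiffAt ℝ 2 u z) (hz : u z ≠ 0) (d : E) :
    fderiv ℝ (fun w => fderiv ℝ (fun t => (u t)⁻¹) w d) z d
      = 2 * fderiv ℝ u z d ^ 2 / u z ^ 3 - fderiv ℝ (fun w => fderiv ℝ u w d) z d / u z ^ 2 := by
  have hnear : ∀ᶠ w in 𝓝 z, DifferentiableAt ℝ u w ∧ u w ≠ 0 :=
    (hu.eventually (by simp)).and (hu.continuousAt.eventually_ne hz) |>.mono
      fun w hw => ⟨hw.1.differentiableAt (by simp), hw.2⟩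
  have hfirst : (fun w => fderiv ℝ (fun t => (u t)⁻¹) w d)
      =ᶠ[𝓝 z] fun w => -fderiv ℝ u w d * (u w ^ 2)⁻¹ :=
    hnear.mono fun w hw => (fderiv_inv_apply hw.1 hw.2 d).trans (div_eq_mul_inv _ _)
  have hu1 : DifferentiableAt ℝ u z := hu.differentiableAt (by simp)
  have hdu : DifferentiableAt ℝ (fun w => -fderiv ℝ u w d) z :=
    ((hu.fderiv_right (m := 1) (by norm_num)).clm_apply contDiffAt_const).differentiableAt
      (by simp) |>.neg
  have hsq : DifferentiableAt ℝ (fun w => u w ^ 2) z := hu1.pow 2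
  have hsq_inv : DifferentiableAt ℝ (fun w => (u w ^ 2)⁻¹) z := hsq.inv (pow_ne_zero 2 hz)
  rw [hfirst.fderiv_eq, fderiv_fun_mul hdu hsq_inv, add_apply, smul_apply, smul_apply,
    fderiv_inv_apply hsq (pow_ne_zero 2 hz), fderiv_fun_neg, fderiv_fun_pow 2 hu1]
  simp only [neg_apply, smul_apply, smul_eq_mul]
  field_simp
  ring

end InverseDerivatives

section PlaneOperators

variable {u v : ℂ → ℝ} {z : ℂ}

theorem Filter.EventuallyEq.pdx_eq (h : u =ᶠ[𝓝 z] v) : pdx u z = pdx v z := by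
  rw [pdx, pdx, h.fderiv_eq]

theorem Filter.EventuallyEq.pdy_eq (h : u =ᶠ[𝓝 z] v) : pdy u z = pdy v z := by
  rw [pdy, pdy, h.fderiv_eq]

theorem Filter.EventuallyEq.lap_eq (h : u =ᶠ[𝓝 z] v) : lap u z = lap v z := by
  have hx : pdx u =ᶠ[𝓝 z] pdx v := h.fderiv.fun_comp (· 1)
  have hy : pdy u =ᶠ[𝓝 z] pdy v := h.fderiv.fun_comp (· Complex.I)
  rw [lap, lap, hx.pdx_eq, hy.pdy_eq]

theorem pdx_inv (hu : DifferentiableAt ℝ u z) (hz : u z ≠ 0) :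
    pdx (fun w => (u w)⁻¹) z = -pdx u z / u z ^ 2 :=
  fderiv_inv_apply hu hz 1

theorem pdy_inv (hu : DifferentiableAt ℝ u z) (hz : u z ≠ 0) :
    pdy (fun w => (u w)⁻¹) z = -pdy u z / u z ^ 2 :=
  fderiv_inv_apply hu hz Complex.I

theorem lap_inv (hu : ContDiffAt ℝ 2 u z) (hz : u z ≠ 0) :
    lap (fun w => (u w)⁻¹) z = 2 * (pdx u z ^ 2 + pdy u z ^ 2) / u z ^ 3 - lap u z / u z ^ 2 := by
  unfold lap pdx pdy
  rw [fderiv_fderiv_inv_apply hu hz, fderiv_fderiv_inv_apply hu hz]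
  ring

end PlaneOperators

def IsRibaucourAt (τ ρ : ℂ → ℝ) (z : ℂ) : Prop :=
  ρ z ^ 2 + Real.exp (-(2 * τ z)) * ρ z * lap ρ z
    = 1 + Real.exp (-(2 * τ z)) * (pdx ρ z ^ 2 + pdy ρ z ^ 2)

section Ribaucour

variable {τ ρ : ℂ → ℝ} {z : ℂ}

theorem IsRibaucourAt.congr {τ' ρ' : ℂ → ℝ} (h : IsRibaucourAt τ ρ z) (hτ : τ z = τ' z)
    (hρ : ρ =ᶠ[𝓝 z] ρ') : IsRibaucourAt τ' ρ' z := by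
  rwa [IsRibaucourAt, ← hτ, ← hρ.eq_of_nhds, ← hρ.pdx_eq, ← hρ.pdy_eq, ← hρ.lap_eq]

theorem IsRibaucourAt.dual (h : IsRibaucourAt τ ρ z) (hρ : ContDiffAt ℝ 2 ρ z)
    (hpos : 0 < ρ z) :
    IsRibaucourAt (fun w => τ w - Real.log (ρ w)) (fun w => (ρ w)⁻¹) z := by
  have hexp : Real.exp (-(2 * (τ z - Real.log (ρ z)))) = Real.exp (-(2 * τ z)) * ρ z ^ 2 := by
    rw [show -(2 * (τ z - Real.log (ρ z))) = -(2 * τ z) + 2 * Real.log (ρ z) by ring,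
      Real.exp_add, ← Real.log_rpow hpos, Real.exp_log (by positivity)]
    norm_cast
  have hρ1 : DifferentiableAt ℝ ρ z := hρ.differentiableAt (by simp)
  unfold IsRibaucourAt at h ⊢
  rw [hexp, pdx_inv hρ1 hpos.ne', pdy_inv hρ1 hpos.ne', lap_inv hρ hpos.ne']
  field_simp
  linear_combination (-1 : ℝ) * h

end Ribaucour

theorem dual_of_ribaucour_is_ribaucour_general
    (Ω : Set ℂ) (hΩ : IsOpen Ω) (τ ρ : ℂ → ℝ)
    (hρ : ContDiffOn ℝ (⊤ : ℕ∞) ρ Ω)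
    (hρpos : ∀ z ∈ Ω, 0 < ρ z)
    (hRibaucour : ∀ z ∈ Ω, ρ z ^ 2 + Real.exp (-(2 * τ z)) * ρ z * lap ρ z
      = 1 + Real.exp (-(2 * τ z)) * (pdx ρ z ^ 2 + pdy ρ z ^ 2))
    (ρs τs : ℂ → ℝ)
    (hρs : ∀ z ∈ Ω, ρs z = 1 / ρ z)
    (hτs : ∀ z ∈ Ω, τs z = τ z - Real.log (ρ z)) :
    ∀ z ∈ Ω, ρs z ^ 2 + Real.exp (-(2 * τs z)) * ρs z * lap ρs z
      = 1 + Real.exp (-(2 * τs z)) * (pdx ρs z ^ 2 + pdy ρs z ^ 2) := by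
  intro z hz
  have hρ2 : ContDiffAt ℝ 2 ρ z :=
    (hρ.contDiffAt (hΩ.mem_nhds hz)).of_le (WithTop.coe_le_coe.mpr le_top)
  have hρs_near : (fun w => (ρ w)⁻¹) =ᶠ[𝓝 z] ρs :=
    eventually_of_mem (hΩ.mem_nhds hz) fun w hw => by rw [hρs w hw, one_div]
  exact (IsRibaucourAt.dual (hRibaucour z hz) hρ2 (hρpos z hz)).congr (hτs z hz).symm hρs_near

/-- if `τ` satisfies the Liouville equation `Δ₀τ + e^{2τ} = 0` and `ρ > 0`
satisfies the Ribaucour equation relative to `τ` on the open set `Ω`, then the dual data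
`ρ* = 1/ρ`, `τ* = τ - log ρ` again satisfy the Ribaucour equation:
`(ρ*)² + e^{-2τ*}ρ*Δ₀ρ* = 1 + e^{-2τ*}((ρ*)_x² + (ρ*)_y²)`. The dual of a Ribaucour
surface is a Ribaucour surface. -/
theorem dual_of_ribaucour_is_ribaucour
    (Ω : Set ℂ) (hΩ : IsOpen Ω) (τ ρ : ℂ → ℝ)
    (hτ : ContDiffOn ℝ (⊤ : ℕ∞) τ Ω) (hρ : ContDiffOn ℝ (⊤ : ℕ∞) ρ Ω)
    (hρpos : ∀ z ∈ Ω, 0 < ρ z)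
    (hLiouville : ∀ z ∈ Ω, lap τ z + Real.exp (2 * τ z) = 0)
    (hRibaucour : ∀ z ∈ Ω, ρ z ^ 2 + Real.exp (-(2 * τ z)) * ρ z * lap ρ z
      = 1 + Real.exp (-(2 * τ z)) * (pdx ρ z ^ 2 + pdy ρ z ^ 2))
    (ρs τs : ℂ → ℝ)
    (hρs : ∀ z ∈ Ω, ρs z = 1 / ρ z)
    (hτs : ∀ z ∈ Ω, τs z = τ z - Real.log (ρ z)) :
    ∀ z ∈ Ω, ρs z ^ 2 + Real.exp (-(2 * τs z)) * ρs z * lap ρs z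
      = 1 + Real.exp (-(2 * τs z)) * (pdx ρs z ^ 2 + pdy ρs z ^ 2) :=
  dual_of_ribaucour_is_ribaucour_general Ω hΩ τ ρ hρ hρpos hRibaucour ρs τs hρs hτs
end

section
/- Let U ⊆ ℝ² be open with coordinates (u,v) and let ρ, Λ, h : U → ℝ be smooth with ρ, Λ > 0, satisfying (log ρ)_u = −(2/Λ)h_u and (log ρ)_v = (2/Λ)h_v on U. Define φ := (1/2)√(Λ/ρ), k₁ := 2ρ/Λ, k₂ := −2ρ/Λ, Ω := −h, W := ρ, Ω₁ := −2√(ρ/Λ) h_u, and Ω₂ := −2√(ρ/Λ) h_v. Then the Ribaucour sphere-congruence system holds on U: (R1) Ω₁,v = Ω₂ φ_u/φ; (R2) Ω₂,u = Ω₁ φ_v/φ; (R3) Ω_u = φΩ₁; (R4) Ω_v = φΩ₂; (R5) W_u = Ω₁k₁φ; (R6) W_v = Ω₂k₂φ. (In the classification of conformal solutions of Cartan's problem, h plays the role of H/K and this shows that Ω = −H/K, W = ρ solve the Ribaucour system for the auxiliary minimal surface with I_m = (Λ/(4ρ))(du²+dv²), II_m = (1/2)(du²−dv²).) -/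
/-!
Apart from first-order calculus, the one real input is the compatibility of the two equations
for `log ρ`: differentiating `Λ (log ρ)_u = -2 h_u` in `v` and `Λ (log ρ)_v = 2 h_v` in `u`, the
symmetry of the mixed partials of `log ρ` and of `h` gives `2 Λ h_uv = Λ_v h_u + Λ_u h_v`, which
is exactly what (R1) and (R2) require. The first-order equations (R3)–(R6) only use
`φ · 2√(ρ/Λ) = 1` together with `ρ_u = -(2ρ/Λ) h_u` and `ρ_v = (2ρ/Λ) h_v`.
-/

/-- Partial derivative in the `u`-direction of a function on `ℝ²`. -/
noncomputable def pu (f : ℝ × ℝ → ℝ) (p : ℝ × ℝ) : ℝ := fderiv ℝ f p (1, 0)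

/-- Partial derivative in the `v`-direction of a function on `ℝ²`. -/
noncomputable def pv (f : ℝ × ℝ → ℝ) (p : ℝ × ℝ) : ℝ := fderiv ℝ f p (0, 1)

open Set

section DirectionalDerivative

variable {E : Type*} [NormedAddCommGroup E] [NormedSpace ℝ E] {f g k : E → ℝ} {p : E}

theorem fderiv_eq_of_eqOn {U : Set E} (hU : IsOpen U) (hfg : EqOn f g U) (hp : p ∈ U) :
    fderiv ℝ f p = fderiv ℝ g p :=
  (hfg.eventuallyEq_of_mem (hU.mem_nhds hp)).fderiv_eq

theorem differentiableAt_fderiv_apply (hf : ContDiffAt ℝ 2 f p) (v : E) :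
    DifferentiableAt ℝ (fun q => fderiv ℝ f q v) p :=
  ((hf.fderiv_right (m := 1) le_rfl).differentiableAt one_ne_zero).clm_apply
    (differentiableAt_const v)

theorem fderiv_fderiv_apply_comm (hf : ContDiffAt ℝ 2 f p) (v w : E) :
    fderiv ℝ (fun q => fderiv ℝ f q v) p w = fderiv ℝ (fun q => fderiv ℝ f q w) p v := by
  have hd := (hf.fderiv_right (m := 1) le_rfl).differentiableAt one_ne_zero
  simp only [fderiv_clm_apply hd (differentiableAt_const _), fderiv_const_apply]
  simpa using hf.isSymmSndFDerivAt (by simp) w v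

theorem fderiv_apply_eq_mul_fderiv_log_apply (hf : DifferentiableAt ℝ f p) (hf0 : f p ≠ 0)
    (v : E) : fderiv ℝ f p v = f p * fderiv ℝ (fun q => Real.log (f q)) p v := by
  rw [fderiv.log hf hf0, smul_apply, smul_eq_mul, mul_inv_cancel_left₀ hf0]

theorem hasFDerivAt_sqrt_div (hf : DifferentiableAt ℝ f p) (hg : DifferentiableAt ℝ g p)
    (hf0 : 0 < f p) (hg0 : 0 < g p) :
    HasFDerivAt (fun q => √(f q / g q))
      ((√(f p / g p) / 2) • ((f p)⁻¹ • fderiv ℝ f p - (g p)⁻¹ • fderiv ℝ g p)) p := by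
  have hfg : 0 < f p / g p := div_pos hf0 hg0
  have hdiv : HasFDerivAt (fun q => f q / g q)
      (f p • (-(g p ^ 2)⁻¹ • fderiv ℝ g p) + (g p)⁻¹ • fderiv ℝ f p) p := by
    simpa only [div_eq_mul_inv, Function.comp_def] using
      hf.hasFDerivAt.fun_mul ((hasDerivAt_inv hg0.ne').comp_hasFDerivAt p hg.hasFDerivAt)
  convert hdiv.sqrt hfg.ne' using 1
  ext v
  have hsq : √(f p / g p) ^ 2 = f p / g p := Real.sq_sqrt hfg.le
  simp only [smul_apply, add_apply, sub_apply, smul_eq_mul]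
  field_simp
  rw [hsq]
  field_simp
  ring

theorem fderiv_const_mul_sqrt_div_apply (c : ℝ) (hf : DifferentiableAt ℝ f p)
    (hg : DifferentiableAt ℝ g p) (hf0 : 0 < f p) (hg0 : 0 < g p) (v : E) :
    fderiv ℝ (fun q => c * √(f q / g q)) p v =
      c * √(f p / g p) * ((fderiv ℝ f p v / f p - fderiv ℝ g p v / g p) / 2) := by
  rw [((hasFDerivAt_sqrt_div hf hg hf0 hg0).const_mul c).fderiv]
  simp only [smul_apply, sub_apply, smul_eq_mul]
  ring

theorem fderiv_const_mul_sqrt_div_apply_div {c : ℝ} (hc : c ≠ 0) (hf : DifferentiableAt ℝ f p)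
    (hg : DifferentiableAt ℝ g p) (hf0 : 0 < f p) (hg0 : 0 < g p) (v : E) :
    fderiv ℝ (fun q => c * √(f q / g q)) p v / (c * √(f p / g p)) =
      (fderiv ℝ f p v / f p - fderiv ℝ g p v / g p) / 2 := by
  have hs : 0 < √(f p / g p) := Real.sqrt_pos.2 (div_pos hf0 hg0)
  rw [fderiv_const_mul_sqrt_div_apply c hf hg hf0 hg0, mul_div_cancel_left₀ _ (by positivity)]

theorem fderiv_const_mul_sqrt_div_mul_apply (c : ℝ) (hf : DifferentiableAt ℝ f p)
    (hg : DifferentiableAt ℝ g p) (hk : DifferentiableAt ℝ k p) (hf0 : 0 < f p) (hg0 : 0 < g p)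
    (v : E) :
    fderiv ℝ (fun q => c * √(f q / g q) * k q) p v =
      c * √(f p / g p) * ((fderiv ℝ f p v / f p - fderiv ℝ g p v / g p) / 2 * k p
        + fderiv ℝ k p v) := by
  have hs : DifferentiableAt ℝ (fun q => c * √(f q / g q)) p :=
    ((hasFDerivAt_sqrt_div hf hg hf0 hg0).const_mul c).differentiableAt
  rw [fderiv_fun_mul hs hk]
  simp only [smul_apply, add_apply, smul_eq_mul,
    fderiv_const_mul_sqrt_div_apply c hf hg hf0 hg0]
  ring

end DirectionalDerivative

theorem half_mul_sqrt_div_mul_neg_two_mul_sqrt_div {a b : ℝ} (ha : 0 < a) (hb : 0 < b) (x : ℝ) :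
    1 / 2 * √(a / b) * (-2 * √(b / a) * x) = -x := by
  have h : √(a / b) * √(b / a) = 1 := by
    rw [← Real.sqrt_mul (div_pos ha hb).le, div_mul_div_comm, mul_comm, div_self (by positivity),
      Real.sqrt_one]
  linear_combination -x * h

theorem two_mul_pv_pu_eq_of_integrability {U : Set (ℝ × ℝ)} (hU : IsOpen U)
    {a Lam h : ℝ × ℝ → ℝ} {p : ℝ × ℝ} (hp : p ∈ U) (ha : ContDiffAt ℝ 2 a p)
    (hh : ContDiffAt ℝ 2 h p) (hLam : DifferentiableAt ℝ Lam p) (hLam0 : ∀ q ∈ U, Lam q ≠ 0)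
    (heq₁ : ∀ q ∈ U, pu a q = -(2 / Lam q) * pu h q)
    (heq₂ : ∀ q ∈ U, pv a q = (2 / Lam q) * pv h q) :
    2 * Lam p * pv (pu h) p = pv Lam p * pu h p + pu Lam p * pv h p := by
  have hu : EqOn (fun q => Lam q * pu a q) (fun q => -2 * pu h q) U := fun q hq => by
    simp only [heq₁ q hq]
    field_simp [hLam0 q hq]
  have hv : EqOn (fun q => Lam q * pv a q) (fun q => 2 * pv h q) U := fun q hq => by
    simp only [heq₂ q hq]
    field_simp [hLam0 q hq]
  have hu' := congrArg (· (0, 1)) (fderiv_eq_of_eqOn hU hu hp)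
  have hv' := congrArg (· (1, 0)) (fderiv_eq_of_eqOn hU hv hp)
  have hua := heq₁ p hp
  have hva := heq₂ p hp
  simp only [pu, pv] at hu' hv' hua hva ⊢
  simp only [fderiv_fun_mul hLam (differentiableAt_fderiv_apply ha _),
    fderiv_const_mul (differentiableAt_fderiv_apply hh _), add_apply, smul_apply, smul_eq_mul,
    hua, hva, fderiv_fderiv_apply_comm ha (1, 0) (0, 1)] at hu' hv'
  field_simp [hLam0 p hp] at hu' hv'
  show 2 * Lam p * fderiv ℝ (fun q => fderiv ℝ h q (1, 0)) p (0, 1) = _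
  linear_combination (hu' - hv') / 2 + Lam p * fderiv_fderiv_apply_comm hh (1, 0) (0, 1)

/-- let `ρ, Λ > 0` and `h` be smooth on the open set `U` with
`(log ρ)_u = -(2/Λ)h_u` and `(log ρ)_v = (2/Λ)h_v`. Then
`φ = (1/2)√(Λ/ρ)`, `k₁ = 2ρ/Λ`, `k₂ = -2ρ/Λ`, `Ω = -h`, `W = ρ`,
`Ω₁ = -2√(ρ/Λ)h_u`, `Ω₂ = -2√(ρ/Λ)h_v` satisfy the Ribaucour sphere-congruence
system (R1)-(R6) on `U`. -/
theorem conformal_cartan_solution_solves_ribaucour_system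
    (U : Set (ℝ × ℝ)) (hU : IsOpen U)
    (ρ Lam h : ℝ × ℝ → ℝ)
    (hρ : ContDiffOn ℝ (⊤ : ℕ∞) ρ U) (hLam : ContDiffOn ℝ (⊤ : ℕ∞) Lam U)
    (hh : ContDiffOn ℝ (⊤ : ℕ∞) h U)
    (hρpos : ∀ p ∈ U, 0 < ρ p) (hLampos : ∀ p ∈ U, 0 < Lam p)
    (heq₁ : ∀ p ∈ U, pu (fun q => Real.log (ρ q)) p = -(2 / Lam p) * pu h p)
    (heq₂ : ∀ p ∈ U, pv (fun q => Real.log (ρ q)) p = (2 / Lam p) * pv h p)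
    (φ k₁ k₂ Om Om₁ Om₂ W : ℝ × ℝ → ℝ)
    (hφ : ∀ p ∈ U, φ p = (1 / 2) * Real.sqrt (Lam p / ρ p))
    (hk₁ : ∀ p ∈ U, k₁ p = 2 * ρ p / Lam p)
    (hk₂ : ∀ p ∈ U, k₂ p = -(2 * ρ p / Lam p))
    (hOm : ∀ p ∈ U, Om p = -h p)
    (hW : ∀ p ∈ U, W p = ρ p)
    (hOm₁ : ∀ p ∈ U, Om₁ p = -2 * Real.sqrt (ρ p / Lam p) * pu h p)
    (hOm₂ : ∀ p ∈ U, Om₂ p = -2 * Real.sqrt (ρ p / Lam p) * pv h p) :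
    ∀ p ∈ U,
      pv Om₁ p = Om₂ p * (pu φ p / φ p) ∧
      pu Om₂ p = Om₁ p * (pv φ p / φ p) ∧
      pu Om p = φ p * Om₁ p ∧
      pv Om p = φ p * Om₂ p ∧
      pu W p = Om₁ p * k₁ p * φ p ∧
      pv W p = Om₂ p * k₂ p * φ p := by
  intro p hp
  have hr := hρpos p hp
  have hL := hLampos p hp
  have hC2 {f : ℝ × ℝ → ℝ} (hf : ContDiffOn ℝ (⊤ : ℕ∞) f U) : ContDiffAt ℝ 2 f p :=
    (hf.contDiffAt (hU.mem_nhds hp)).of_le (WithTop.coe_le_coe.2 le_top)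
  have dρ := (hC2 hρ).differentiableAt two_ne_zero
  have dL := (hC2 hLam).differentiableAt two_ne_zero
  have hmix := two_mul_pv_pu_eq_of_integrability hU hp ((hC2 hρ).log hr.ne') (hC2 hh) dL
    (fun q hq => (hLampos q hq).ne') heq₁ heq₂
  have hsym := fderiv_fderiv_apply_comm (hC2 hh) (1, 0) (0, 1)
  -- from here on `ring` must see each partial derivative as a single `fderiv` atom
  unfold pu at heq₁ hOm₁ hmix ⊢
  unfold pv at heq₂ hOm₂ hmix ⊢
  have hρu := (fderiv_apply_eq_mul_fderiv_log_apply dρ hr.ne' _).trans (congrArg _ (heq₁ p hp))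
  have hρv := (fderiv_apply_eq_mul_fderiv_log_apply dρ hr.ne' _).trans (congrArg _ (heq₂ p hp))
  have hφ' (v) : fderiv ℝ φ p v / φ p = (fderiv ℝ Lam p v / Lam p - fderiv ℝ ρ p v / ρ p) / 2 := by
    rw [fderiv_eq_of_eqOn hU hφ hp, hφ p hp]
    exact fderiv_const_mul_sqrt_div_apply_div (by norm_num) dL dρ hL hr v
  have hφOm (x : ℝ) : φ p * (-2 * √(ρ p / Lam p) * x) = -x := by
    rw [hφ p hp, half_mul_sqrt_div_mul_neg_two_mul_sqrt_div hL hr]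
  have hOm' (v) : fderiv ℝ Om p v = -fderiv ℝ h p v := by
    rw [fderiv_eq_of_eqOn hU hOm hp, fderiv_fun_neg, neg_apply]
  have hW' : fderiv ℝ W p = fderiv ℝ ρ p := fderiv_eq_of_eqOn hU hW hp
  refine ⟨?_, ?_, ?_, ?_, ?_, ?_⟩
  · rw [fderiv_eq_of_eqOn hU hOm₁ hp, fderiv_const_mul_sqrt_div_mul_apply _ dρ dL
      (differentiableAt_fderiv_apply (hC2 hh) _) hr hL, hφ', hOm₂ p hp, hρu, hρv]
    field_simp
    linear_combination -hmix
  · rw [fderiv_eq_of_eqOn hU hOm₂ hp, fderiv_const_mul_sqrt_div_mul_apply _ dρ dL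
      (differentiableAt_fderiv_apply (hC2 hh) _) hr hL, hφ', hOm₁ p hp, hρu, hρv]
    field_simp
    linear_combination -hmix + 2 * Lam p * hsym
  · rw [hOm₁ p hp, hφOm, hOm']
  · rw [hOm₂ p hp, hφOm, hOm']
  · rw [mul_right_comm, mul_comm (Om₁ p), hOm₁ p hp, hφOm, hk₁ p hp, hW', hρu]
    ring
  · rw [mul_right_comm, mul_comm (Om₂ p), hOm₂ p hp, hφOm, hk₂ p hp, hW', hρv]
    ring
end
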